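/- arXiv:2403.20181 — 2 statements merged into one kernel-verified Lean document; each statement's English description precedes it below -/
import Mathlib

section
/- Let X : ℝ × Ω → ℝ² be the flow of a smooth compactly supported vector field f. Define A_s(y) = det(DX(s,y)) · DX(s,y)^{-1} (DX(s,y)^t)^{-1}. Then A_s(y) = I + s( div f(y) · I − (Df(y) + Df(y)^t) ) + O(s²) as s → 0, uniformly on compact sets. -/
open Matrix

/-- Jacobian matrix of a vector field on `ℝ²`. -/
noncomputable def jac (g : (Fin 2 → ℝ) → (Fin 2 → ℝ)) (y : Fin 2 → ℝ) :
    Matrix (Fin 2) (Fin 2) ℝ := fun i j => fderiv ℝ g y (Pi.single j 1) i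

/-- Divergence of a vector field on `ℝ²`. -/
noncomputable def divg (g : (Fin 2 → ℝ) → (Fin 2 → ℝ)) (y : Fin 2 → ℝ) : ℝ :=
  (jac g y).trace

set_option maxHeartbeats 1000000

noncomputable section St4Aux

/-- Kronecker delta. -/
def ee (i j : Fin 2) : ℝ := if i = j then 1 else 0

/-- Spatial Jacobian entries of `F : ℝ × ℝ² → ℝ²` as a function of the joint variable. -/
def Jm (F : ℝ × (Fin 2 → ℝ) → (Fin 2 → ℝ)) (p : ℝ × (Fin 2 → ℝ)) : Fin 2 → Fin 2 → ℝ :=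
  fun i j => fderiv ℝ F p (0, Pi.single j 1) i

def Nm (f : (Fin 2 → ℝ) → (Fin 2 → ℝ)) (F : ℝ × (Fin 2 → ℝ) → (Fin 2 → ℝ))
    (p : ℝ × (Fin 2 → ℝ)) : Fin 2 → Fin 2 → ℝ :=
  fun i j => ∑ k, fderiv ℝ f (F p) (Pi.single k 1) i * Jm F p k j

def dtm (F : ℝ × (Fin 2 → ℝ) → (Fin 2 → ℝ)) (p : ℝ × (Fin 2 → ℝ)) : ℝ :=
  Jm F p 0 0 * Jm F p 1 1 - Jm F p 0 1 * Jm F p 1 0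

def trJ (F : ℝ × (Fin 2 → ℝ) → (Fin 2 → ℝ)) (p : ℝ × (Fin 2 → ℝ)) : ℝ :=
  Jm F p 0 0 + Jm F p 1 1

def trN (f : (Fin 2 → ℝ) → (Fin 2 → ℝ)) (F : ℝ × (Fin 2 → ℝ) → (Fin 2 → ℝ))
    (p : ℝ × (Fin 2 → ℝ)) : ℝ := Nm f F p 0 0 + Nm f F p 1 1

def dtd (f : (Fin 2 → ℝ) → (Fin 2 → ℝ)) (F : ℝ × (Fin 2 → ℝ) → (Fin 2 → ℝ))
    (p : ℝ × (Fin 2 → ℝ)) : ℝ :=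
  Nm f F p 0 0 * Jm F p 1 1 + Jm F p 0 0 * Nm f F p 1 1 -
    (Nm f F p 0 1 * Jm F p 1 0 + Jm F p 0 1 * Nm f F p 1 0)

def cm (F : ℝ × (Fin 2 → ℝ) → (Fin 2 → ℝ)) (p : ℝ × (Fin 2 → ℝ)) : Fin 2 → Fin 2 → ℝ :=
  fun i j => ∑ k, (trJ F p * ee i k - Jm F p i k) * (trJ F p * ee j k - Jm F p j k)

def cmd (f : (Fin 2 → ℝ) → (Fin 2 → ℝ)) (F : ℝ × (Fin 2 → ℝ) → (Fin 2 → ℝ))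
    (p : ℝ × (Fin 2 → ℝ)) : Fin 2 → Fin 2 → ℝ :=
  fun i j => ∑ k, ((trN f F p * ee i k - Nm f F p i k) * (trJ F p * ee j k - Jm F p j k)
    + (trJ F p * ee i k - Jm F p i k) * (trN f F p * ee j k - Nm f F p j k))

def gm (F : ℝ × (Fin 2 → ℝ) → (Fin 2 → ℝ)) (p : ℝ × (Fin 2 → ℝ)) : Fin 2 → Fin 2 → ℝ :=
  fun i j => (dtm F p)⁻¹ * cm F p i j

def Gm (f : (Fin 2 → ℝ) → (Fin 2 → ℝ)) (F : ℝ × (Fin 2 → ℝ) → (Fin 2 → ℝ))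
    (p : ℝ × (Fin 2 → ℝ)) : Fin 2 → Fin 2 → ℝ :=
  fun i j => (dtm F p)⁻¹ * cmd f F p i j
    - (dtm F p)⁻¹ * (dtm F p)⁻¹ * dtd f F p * cm F p i j

variable {f : (Fin 2 → ℝ) → (Fin 2 → ℝ)} {F : ℝ × (Fin 2 → ℝ) → (Fin 2 → ℝ)}

lemma contDiff_Jm (hF : ContDiff ℝ 2 F) (i j : Fin 2) :
    ContDiff ℝ 1 fun p => Jm F p i j := by
  have h1 : ContDiff ℝ 1 (fderiv ℝ F) := hF.fderiv_right (by norm_num)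
  have h2 : ContDiff ℝ 1 fun p => fderiv ℝ F p ((0 : ℝ × (Fin 2 → ℝ)) + (0, Pi.single j 1)) :=
    h1.clm_apply contDiff_const
  simpa [Jm] using contDiff_pi.1 (by simpa using h2) i

lemma contDiff_Nm (hf : ContDiff ℝ 2 f) (hF : ContDiff ℝ 2 F) (i j : Fin 2) :
    ContDiff ℝ 1 fun p => Nm f F p i j := by
  have h1 : ContDiff ℝ 1 fun p => fderiv ℝ f (F p) :=
    (hf.fderiv_right (by norm_num)).comp (hF.of_le (by norm_num))
  refine ContDiff.sum fun k _ => ContDiff.mul ?_ (contDiff_Jm hF k j)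
  have h2 : ContDiff ℝ 1 fun p => fderiv ℝ f (F p) (Pi.single k 1) :=
    h1.clm_apply contDiff_const
  exact contDiff_pi.1 h2 i

lemma contDiff_dtm (hF : ContDiff ℝ 2 F) : ContDiff ℝ 1 (dtm F) :=
  ((contDiff_Jm hF 0 0).mul (contDiff_Jm hF 1 1)).sub
    ((contDiff_Jm hF 0 1).mul (contDiff_Jm hF 1 0))

lemma contDiff_trJ (hF : ContDiff ℝ 2 F) : ContDiff ℝ 1 (trJ F) :=
  (contDiff_Jm hF 0 0).add (contDiff_Jm hF 1 1)

lemma contDiff_trN (hf : ContDiff ℝ 2 f) (hF : ContDiff ℝ 2 F) : ContDiff ℝ 1 (trN f F) :=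
  (contDiff_Nm hf hF 0 0).add (contDiff_Nm hf hF 1 1)

lemma contDiff_dtd (hf : ContDiff ℝ 2 f) (hF : ContDiff ℝ 2 F) : ContDiff ℝ 1 (dtd f F) :=
  (((contDiff_Nm hf hF 0 0).mul (contDiff_Jm hF 1 1)).add
    ((contDiff_Jm hF 0 0).mul (contDiff_Nm hf hF 1 1))).sub
    (((contDiff_Nm hf hF 0 1).mul (contDiff_Jm hF 1 0)).add
      ((contDiff_Jm hF 0 1).mul (contDiff_Nm hf hF 1 0)))

lemma contDiff_cm (hF : ContDiff ℝ 2 F) (i j : Fin 2) :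
    ContDiff ℝ 1 fun p => cm F p i j := by
  refine ContDiff.sum fun k _ => ContDiff.mul ?_ ?_ <;>
    exact ((contDiff_trJ hF).mul contDiff_const).sub (contDiff_Jm hF _ k)

lemma contDiff_cmd (hf : ContDiff ℝ 2 f) (hF : ContDiff ℝ 2 F) (i j : Fin 2) :
    ContDiff ℝ 1 fun p => cmd f F p i j := by
  refine ContDiff.sum fun k _ => ContDiff.add (ContDiff.mul ?_ ?_) (ContDiff.mul ?_ ?_)
  · exact ((contDiff_trN hf hF).mul contDiff_const).sub (contDiff_Nm hf hF _ k)
  · exact ((contDiff_trJ hF).mul contDiff_const).sub (contDiff_Jm hF _ k)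
  · exact ((contDiff_trJ hF).mul contDiff_const).sub (contDiff_Jm hF _ k)
  · exact ((contDiff_trN hf hF).mul contDiff_const).sub (contDiff_Nm hf hF _ k)

lemma contDiffOn_Gm (hf : ContDiff ℝ 2 f) (hF : ContDiff ℝ 2 F) :
    ContDiffOn ℝ 1 (Gm f F) {p | dtm F p ≠ 0} := by
  have hinv : ContDiffOn ℝ 1 (fun p => (dtm F p)⁻¹) {p | dtm F p ≠ 0} :=
    ((contDiff_dtm hF).contDiffOn).inv (fun x hx => hx)
  refine contDiffOn_pi.2 fun i => contDiffOn_pi.2 fun j => ?_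
  exact (hinv.mul (contDiff_cmd hf hF i j).contDiffOn).sub
    (((hinv.mul hinv).mul (contDiff_dtd hf hF).contDiffOn).mul (contDiff_cm hF i j).contDiffOn)

lemma hasDerivAt_Jm (hf : ContDiff ℝ 2 f) (hF : ContDiff ℝ 2 F)
    (hflow : ∀ p, fderiv ℝ F p ((1:ℝ), (0 : Fin 2 → ℝ)) = f (F p))
    (s : ℝ) (y : Fin 2 → ℝ) (i j : Fin 2) :
    HasDerivAt (fun t => Jm F (t, y) i j) (Nm f F (s, y) i j) s := by
  have hFd : Differentiable ℝ F := hF.differentiable (by norm_num)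
  have hΦ : ContDiff ℝ 1 (fderiv ℝ F) := hF.fderiv_right (by norm_num)
  have hΦd : HasFDerivAt (fderiv ℝ F) (fderiv ℝ (fderiv ℝ F) (s, y)) (s, y) :=
    ((hΦ.differentiable (by norm_num)) _).hasFDerivAt
  have hcurve : HasDerivAt (fun t : ℝ => (t, y)) ((1:ℝ), (0 : Fin 2 → ℝ)) s :=
    (hasDerivAt_id s).prodMk (hasDerivAt_const s y)
  have h1 : HasDerivAt (fun t => fderiv ℝ F (t, y))
      (fderiv ℝ (fderiv ℝ F) (s, y) (1, 0)) s := hΦd.comp_hasDerivAt s hcurve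
  have h2 : HasDerivAt (fun t => fderiv ℝ F (t, y) (0, Pi.single j 1))
      (fderiv ℝ (fderiv ℝ F) (s, y) (1, 0) (0, Pi.single j 1)) s := by
    simpa using h1.clm_apply (hasDerivAt_const s ((0 : ℝ), Pi.single j (1:ℝ)))
  have hsym : fderiv ℝ (fderiv ℝ F) (s, y) ((1:ℝ), (0 : Fin 2 → ℝ)) (0, Pi.single j 1)
      = fderiv ℝ (fderiv ℝ F) (s, y) (0, Pi.single j 1) ((1:ℝ), (0 : Fin 2 → ℝ)) :=
    second_derivative_symmetric_of_eventually_of_real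
      (Filter.Eventually.of_forall fun p => (hFd p).hasFDerivAt) hΦd _ _
  -- identify the second slot with the derivative of p ↦ f (F p)
  have h3 : HasFDerivAt (fun p => fderiv ℝ F p ((1:ℝ), (0 : Fin 2 → ℝ)))
      ((ContinuousLinearMap.apply ℝ (Fin 2 → ℝ) ((1:ℝ), (0 : Fin 2 → ℝ))).comp
        (fderiv ℝ (fderiv ℝ F) (s, y))) (s, y) :=
    (ContinuousLinearMap.apply ℝ (Fin 2 → ℝ)
      ((1:ℝ), (0 : Fin 2 → ℝ))).hasFDerivAt.comp _ hΦd
  have h3' : HasFDerivAt (fun p => f (F p))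
      ((ContinuousLinearMap.apply ℝ (Fin 2 → ℝ) ((1:ℝ), (0 : Fin 2 → ℝ))).comp
        (fderiv ℝ (fderiv ℝ F) (s, y))) (s, y) := by
    have : (fun p => fderiv ℝ F p ((1:ℝ), (0 : Fin 2 → ℝ))) = fun p => f (F p) :=
      funext hflow
    rwa [this] at h3
  have h4 : HasFDerivAt (fun p => f (F p))
      ((fderiv ℝ f (F (s, y))).comp (fderiv ℝ F (s, y))) (s, y) :=
    ((hf.differentiable (by norm_num)) _).hasFDerivAt.comp _ (hFd _).hasFDerivAt
  have h5 := h3'.unique h4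
  have h6 : fderiv ℝ (fderiv ℝ F) (s, y) (0, Pi.single j 1) ((1:ℝ), (0 : Fin 2 → ℝ))
      = fderiv ℝ f (F (s, y)) (fderiv ℝ F (s, y) (0, Pi.single j 1)) := by
    have := congrFun (congrArg (fun (L : (ℝ × (Fin 2 → ℝ)) →L[ℝ] (Fin 2 → ℝ)) => L.toFun) h5)
      ((0:ℝ), Pi.single j (1:ℝ))
    simpa using this
  -- expand the directional derivative of f as a sum over coordinates
  have h7 : fderiv ℝ f (F (s, y)) (fderiv ℝ F (s, y) (0, Pi.single j 1)) i
      = Nm f F (s, y) i j := by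
    set w := fderiv ℝ F (s, y) ((0:ℝ), Pi.single j (1:ℝ)) with hw
    have hwsum : w = ∑ k, w k • (Pi.single k 1 : Fin 2 → ℝ) := by
      conv_lhs => rw [pi_eq_sum_univ w]
      refine Finset.sum_congr rfl fun k _ => ?_
      congr 1
      ext l
      simp [Pi.single_apply, eq_comm]
    calc fderiv ℝ f (F (s, y)) w i
        = (∑ k, w k • fderiv ℝ f (F (s, y)) (Pi.single k 1)) i := by
          conv_lhs => rw [hwsum]
          rw [map_sum]
          simp only [ContinuousLinearMap.map_smul]
      _ = ∑ k, w k * fderiv ℝ f (F (s, y)) (Pi.single k 1) i := by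
          simp [Finset.sum_apply]
      _ = Nm f F (s, y) i j := by
          simp only [Nm, Jm, hw]
          exact Finset.sum_congr rfl fun k _ => mul_comm _ _
  have h8 : HasDerivAt (fun t => Jm F (t, y) i j)
      (fderiv ℝ (fderiv ℝ F) (s, y) (1, 0) (0, Pi.single j 1) i) s :=
    hasDerivAt_pi.1 h2 i
  rw [hsym] at h8
  rw [h6] at h8
  rwa [h7] at h8

lemma hasDerivAt_gm (hf : ContDiff ℝ 2 f) (hF : ContDiff ℝ 2 F)
    (hflow : ∀ p, fderiv ℝ F p ((1:ℝ), (0 : Fin 2 → ℝ)) = f (F p))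
    {s : ℝ} {y : Fin 2 → ℝ} (hne : dtm F (s, y) ≠ 0) (i j : Fin 2) :
    HasDerivAt (fun t => gm F (t, y) i j) (Gm f F (s, y) i j) s := by
  have hJ : ∀ i j, HasDerivAt (fun t => Jm F (t, y) i j) (Nm f F (s, y) i j) s :=
    hasDerivAt_Jm hf hF hflow s y
  have htr : HasDerivAt (fun t => trJ F (t, y)) (trN f F (s, y)) s := (hJ 0 0).add (hJ 1 1)
  have hdt : HasDerivAt (fun t => dtm F (t, y)) (dtd f F (s, y)) s :=
    ((hJ 0 0).mul (hJ 1 1)).sub ((hJ 0 1).mul (hJ 1 0))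
  have hcm : HasDerivAt (fun t => cm F (t, y) i j) (cmd f F (s, y) i j) s := by
    simp only [cm, cmd]
    exact HasDerivAt.fun_sum fun k _ =>
      ((htr.mul_const (ee i k)).sub (hJ i k)).mul ((htr.mul_const (ee j k)).sub (hJ j k))
  have hinv : HasDerivAt (fun t => (dtm F (t, y))⁻¹)
      (-dtd f F (s, y) / (dtm F (s, y)) ^ 2) s := hdt.inv hne
  have hmain := hinv.mul hcm
  have : -dtd f F (s, y) / dtm F (s, y) ^ 2 * cm F (s, y) i j
      + (dtm F (s, y))⁻¹ * cmd f F (s, y) i j = Gm f F (s, y) i j := by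
    simp only [Gm]
    field_simp
    ring
  rw [this] at hmain
  exact hmain

lemma Aentry (M : Matrix (Fin 2) (Fin 2) ℝ) (h : M.det ≠ 0) (i j : Fin 2) :
    (M.det • (M⁻¹ * Mᵀ⁻¹)) i j
      = (M.det)⁻¹ * ∑ k, (M.trace * ee i k - M i k) * (M.trace * ee j k - M j k) := by
  rw [show Mᵀ⁻¹ = M⁻¹ᵀ from (Matrix.transpose_nonsing_inv M).symm, Matrix.inv_def]
  have hdet : M.det = M 0 0 * M 1 1 - M 0 1 * M 1 0 := Matrix.det_fin_two M
  have hne : M 0 0 * M 1 1 - M 0 1 * M 1 0 ≠ 0 := by rwa [hdet] at h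
  fin_cases i <;> fin_cases j <;>
    · simp [Matrix.mul_apply, Matrix.smul_apply, Fin.sum_univ_two, Matrix.adjugate_fin_two,
        Matrix.trace_fin_two, ee, Ring.inverse_eq_inv', hdet, Matrix.transpose_apply,
        Matrix.cons_val_zero, Matrix.cons_val_one, Matrix.head_cons, Matrix.vecHead,
        Matrix.vecTail, Function.comp, Matrix.vecMul, dotProduct]
      field_simp [hne]

end St4Aux


/-- For the flow `X` of a smooth compactly supported vector field `f`,
`A_s(y) = det(DX) · DX⁻¹ (DXᵗ)⁻¹` satisfies
`A_s(y) = I + s(div f(y) · I − (Df(y) + Df(y)ᵗ)) + O(s²)` as `s → 0`,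
uniformly on compact sets (entrywise bound). -/
theorem stmt4 (f : (Fin 2 → ℝ) → (Fin 2 → ℝ)) (hf : ContDiff ℝ 2 f)
    (hsupp : HasCompactSupport f)
    (X : ℝ → (Fin 2 → ℝ) → (Fin 2 → ℝ))
    (hX0 : ∀ x, X 0 x = x)
    (hXode : ∀ s x, HasDerivAt (fun t => X t x) (f (X s x)) s)
    (hXsmooth : ContDiff ℝ 2 (fun p : ℝ × (Fin 2 → ℝ) => X p.1 p.2))
    (A : ℝ → (Fin 2 → ℝ) → Matrix (Fin 2) (Fin 2) ℝ)
    (hA : ∀ s y, A s y = (jac (X s) y).det • ((jac (X s) y)⁻¹ * ((jac (X s) y)ᵀ)⁻¹))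
    (K : Set (Fin 2 → ℝ)) (hK : IsCompact K) :
    ∃ C > 0, ∃ δ > 0, ∀ s : ℝ, |s| < δ → ∀ y ∈ K, ∀ i j : Fin 2,
      |A s y i j -
        ((1 : Matrix (Fin 2) (Fin 2) ℝ)
          + s • (divg f y • (1 : Matrix (Fin 2) (Fin 2) ℝ) - (jac f y + (jac f y)ᵀ))) i j|
        ≤ C * s ^ 2 := by
  classical
  set F : ℝ × (Fin 2 → ℝ) → (Fin 2 → ℝ) := fun p => X p.1 p.2 with hFdef
  have hF : ContDiff ℝ 2 F := hXsmooth
  have hFd : Differentiable ℝ F := hF.differentiable (by norm_num)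
  -- flow property: time derivative of F is f ∘ F
  have hflow : ∀ p : ℝ × (Fin 2 → ℝ), fderiv ℝ F p ((1:ℝ), (0 : Fin 2 → ℝ)) = f (F p) := by
    rintro ⟨s0, y0⟩
    have hcurve : HasDerivAt (fun t : ℝ => (t, y0)) ((1:ℝ), (0 : Fin 2 → ℝ)) s0 :=
      (hasDerivAt_id _).prodMk (hasDerivAt_const _ _)
    have h1 : HasDerivAt (fun t => F (t, y0)) (fderiv ℝ F (s0, y0) (1, 0)) s0 :=
      by have := (hFd (s0, y0)).hasFDerivAt.comp_hasDerivAt s0 hcurve; exact this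
    exact h1.unique (hXode s0 y0)
  -- identification of jac with Jm
  have hjac : ∀ s y (i j : Fin 2), jac (X s) y i j = Jm F (s, y) i j := by
    intro s y i j
    have h2 : HasFDerivAt (fun y' => (s, y'))
        (ContinuousLinearMap.inr ℝ ℝ (Fin 2 → ℝ)) y := hasFDerivAt_prodMk_right s y
    have h1 : HasFDerivAt (X s)
        ((fderiv ℝ F (s, y)).comp (ContinuousLinearMap.inr ℝ ℝ (Fin 2 → ℝ))) y :=
      (hFd (s, y)).hasFDerivAt.comp y h2
    rw [jac, h1.fderiv]
    simp [Jm]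
  have hdet : ∀ s y, (jac (X s) y).det = dtm F (s, y) := by
    intro s y
    rw [Matrix.det_fin_two, dtm, hjac, hjac, hjac, hjac]
  -- A equals gm when the determinant is nonzero
  have hAgm : ∀ s y, dtm F (s, y) ≠ 0 → ∀ i j, A s y i j = gm F (s, y) i j := by
    intro s y hne i j
    have h0 : (jac (X s) y).det ≠ 0 := by rw [hdet]; exact hne
    rw [hA, Aentry _ h0 i j, gm, cm, hdet]
    congr 1
    refine Finset.sum_congr rfl fun k _ => ?_
    rw [Matrix.trace_fin_two, trJ, hjac, hjac, hjac s y i k, hjac s y j k]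
  -- values at s = 0
  have hJ0 : ∀ y (i j : Fin 2), Jm F (0, y) i j = ee i j := by
    intro y i j
    rw [← hjac]
    have hXid : X 0 = id := funext hX0
    rw [jac, hXid, fderiv_id]
    simp [ee, Pi.single_apply, eq_comm]
  have hF0 : ∀ y, F (0, y) = y := fun y => hX0 y
  have hN0 : ∀ y (i j : Fin 2), Nm f F (0, y) i j = jac f y i j := by
    intro y i j
    rw [Nm]
    simp only [hF0, hJ0]
    rw [Fin.sum_univ_two]
    fin_cases j <;> simp [ee, jac]
  have hdtm0 : ∀ y, dtm F (0, y) = 1 := by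
    intro y; simp [dtm, hJ0, ee]
  have hgm0 : ∀ y (i j : Fin 2), gm F (0, y) i j = ee i j := by
    intro y i j
    rw [gm, hdtm0, cm]
    simp only [hJ0]
    rw [Fin.sum_univ_two]
    fin_cases i <;> fin_cases j <;> simp [ee, trJ, hJ0] <;> ring
  have hGm0 : ∀ y (i j : Fin 2),
      Gm f F (0, y) i j = divg f y * ee i j - jac f y i j - jac f y j i := by
    intro y i j
    rw [Gm, hdtm0, cmd, cm, dtd, trN, trJ]
    simp only [hJ0, hN0]
    rw [Fin.sum_univ_two, Fin.sum_univ_two]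
    have hdivg : divg f y = jac f y 0 0 + jac f y 1 1 := Matrix.trace_fin_two _
    fin_cases i <;> fin_cases j <;> simp [ee, hdivg] <;> ring
  -- tube lemma: uniform nonvanishing of the determinant near s = 0
  have hdtmc : Continuous (dtm F) := (contDiff_dtm hF).continuous
  set W : Set (ℝ × (Fin 2 → ℝ)) := {p | dtm F p ≠ 0} with hWdef
  have hWopen : IsOpen W := isOpen_compl_singleton.preimage hdtmc
  have hsub : (({0} : Set ℝ) ×ˢ K) ⊆ W := by
    rintro ⟨t, y⟩ ⟨ht, hy⟩
    simp only [Set.mem_singleton_iff] at ht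
    subst ht
    simp only [hWdef, Set.mem_setOf_eq, hdtm0]
    norm_num
  obtain ⟨u, v, hu, hv, h0u, hKv, huv⟩ :=
    generalized_tube_lemma isCompact_singleton hK hWopen hsub
  obtain ⟨δ', hδ'pos, hball⟩ := Metric.isOpen_iff.1 hu 0 (h0u rfl)
  set δ : ℝ := δ' / 2 with hδdef
  have hδpos : 0 < δ := by positivity
  have hmemW : ∀ t y, |t| ≤ δ → y ∈ K → (t, y) ∈ W := by
    intro t y ht hy
    refine huv ⟨hball ?_, hKv hy⟩
    simp only [Metric.mem_ball, Real.dist_eq, sub_zero]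
    linarith [ht]
  have hScW : (Set.Icc (-δ) δ ×ˢ K) ⊆ W := by
    rintro ⟨t, y⟩ ⟨ht, hy⟩
    exact hmemW t y (abs_le.2 ⟨ht.1, ht.2⟩) hy
  have hSc : IsCompact (Set.Icc (-δ) δ ×ˢ K) := isCompact_Icc.prod hK
  -- bound on the derivative of Gm
  have hGm1 : ContDiffOn ℝ 1 (Gm f F) W := contDiffOn_Gm hf hF
  have hGdiff : ∀ p ∈ W, DifferentiableAt ℝ (Gm f F) p := fun p hp =>
    (hGm1.differentiableOn (by norm_num)).differentiableAt (hWopen.mem_nhds hp)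
  have hfc : ContinuousOn (fderiv ℝ (Gm f F)) W :=
    hGm1.continuousOn_fderiv_of_isOpen hWopen le_rfl
  obtain ⟨L, hL⟩ := hSc.exists_bound_of_continuousOn (hfc.mono hScW)
  set L' : ℝ := max L 0 with hL'def
  -- MVT: Lipschitz bound in the time variable
  have hmvt : ∀ y ∈ K, ∀ t : ℝ, |t| ≤ δ →
      ‖Gm f F (t, y) - Gm f F (0, y)‖ ≤ L' * |t| := by
    intro y hy t ht
    have hconv : Convex ℝ (Set.Icc (-δ) δ ×ˢ ({y} : Set (Fin 2 → ℝ))) :=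
      (convex_Icc _ _).prod (convex_singleton y)
    have hsub2 : (Set.Icc (-δ) δ ×ˢ ({y} : Set (Fin 2 → ℝ))) ⊆ Set.Icc (-δ) δ ×ˢ K := by
      rintro ⟨a, b⟩ ⟨ha, hb⟩
      exact ⟨ha, by simp only [Set.mem_singleton_iff] at hb; exact hb ▸ hy⟩
    have hderW : ∀ x ∈ Set.Icc (-δ) δ ×ˢ ({y} : Set (Fin 2 → ℝ)),
        HasFDerivWithinAt (Gm f F) (fderiv ℝ (Gm f F) x)
          (Set.Icc (-δ) δ ×ˢ ({y} : Set (Fin 2 → ℝ))) x := fun x hx =>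
      (hGdiff x (hScW (hsub2 hx))).hasFDerivAt.hasFDerivWithinAt
    have hbd : ∀ x ∈ Set.Icc (-δ) δ ×ˢ ({y} : Set (Fin 2 → ℝ)),
        ‖fderiv ℝ (Gm f F) x‖ ≤ L' := fun x hx =>
      (hL x (hsub2 hx)).trans (le_max_left _ _)
    have hx1 : ((t : ℝ), y) ∈ Set.Icc (-δ) δ ×ˢ ({y} : Set (Fin 2 → ℝ)) :=
      ⟨(abs_le.1 ht : _), rfl⟩
    have h0mem : (0:ℝ) ∈ Set.Icc (-δ) δ := by
      constructor <;> linarith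
    have hx0 : ((0 : ℝ), y) ∈ Set.Icc (-δ) δ ×ˢ ({y} : Set (Fin 2 → ℝ)) :=
      ⟨h0mem, rfl⟩
    have := hconv.norm_image_sub_le_of_norm_hasFDerivWithin_le hderW hbd hx0 hx1
    have hnorm : ‖((t : ℝ), y) - ((0 : ℝ), y)‖ = |t| := by
      rw [Prod.norm_def]
      simp [Real.norm_eq_abs]
    rwa [hnorm] at this
  -- main conclusion
  refine ⟨L' + 1, by positivity, δ, hδpos, ?_⟩
  intro s hs y hy i j
  have hsδ : |s| ≤ δ := le_of_lt hs
  have huIcc : ∀ t ∈ Set.uIcc (0:ℝ) s, |t| ≤ δ := by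
    intro t ht
    rw [Set.uIcc_eq_union] at ht
    rcases ht with ht | ht
    · rcases Set.mem_Icc.1 ht with ⟨h1, h2⟩
      rw [abs_le]; constructor <;> [linarith [abs_nonneg s]; linarith [le_abs_self s]]
    · rcases Set.mem_Icc.1 ht with ⟨h1, h2⟩
      rw [abs_le]
      constructor
      · have := neg_abs_le s; linarith
      · linarith [hδpos.le]
  have hder : ∀ t ∈ Set.uIcc (0:ℝ) s,
      HasDerivAt (fun t => gm F (t, y) i j) (Gm f F (t, y) i j) t := by
    intro t ht
    exact hasDerivAt_gm hf hF hflow (hmemW t y (huIcc t ht) hy) i j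
  have hcontG : ContinuousOn (fun t => Gm f F (t, y) i j) (Set.uIcc (0:ℝ) s) := by
    have h1 : ContinuousOn (Gm f F) W := hGm1.continuousOn
    have h2 : ContinuousOn (fun t : ℝ => Gm f F (t, y)) (Set.uIcc (0:ℝ) s) := by
      apply h1.comp (Continuous.continuousOn (continuous_id.prodMk continuous_const))
      intro t ht
      exact hmemW t y (huIcc t ht) hy
    exact ((continuous_apply j).comp (continuous_apply i)).comp_continuousOn h2
  have hint : IntervalIntegrable (fun t => Gm f F (t, y) i j) MeasureTheory.volume 0 s :=
    hcontG.intervalIntegrable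
  have hint0 : IntervalIntegrable (fun _ : ℝ => Gm f F (0, y) i j) MeasureTheory.volume 0 s :=
    intervalIntegrable_const
  have hftc : ∫ t in (0:ℝ)..s, Gm f F (t, y) i j = gm F (s, y) i j - gm F (0, y) i j :=
    intervalIntegral.integral_eq_sub_of_hasDerivAt hder hint
  have hkey : gm F (s, y) i j - gm F (0, y) i j - s * Gm f F (0, y) i j
      = ∫ t in (0:ℝ)..s, (Gm f F (t, y) i j - Gm f F (0, y) i j) := by
    rw [intervalIntegral.integral_sub hint hint0, hftc, intervalIntegral.integral_const]
    simp only [smul_eq_mul, sub_zero]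
  have hbound : |gm F (s, y) i j - gm F (0, y) i j - s * Gm f F (0, y) i j|
      ≤ L' * |s| * |s| := by
    rw [hkey, ← Real.norm_eq_abs]
    have := intervalIntegral.norm_integral_le_of_norm_le_const
      (C := L' * |s|) (f := fun t => Gm f F (t, y) i j - Gm f F (0, y) i j)
      (a := 0) (b := s) ?_
    · calc ‖∫ t in (0:ℝ)..s, (Gm f F (t, y) i j - Gm f F (0, y) i j)‖
          ≤ L' * |s| * |s - 0| := this
        _ = L' * |s| * |s| := by rw [sub_zero]
    · intro t ht
      have h1 : |t| ≤ |s| := by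
        rcases Set.mem_uIoc.1 ht with ⟨h1, h2⟩ | ⟨h1, h2⟩
        · rw [abs_le]; constructor <;> [linarith [abs_nonneg s]; linarith [le_abs_self s]]
        · rw [abs_le]; constructor <;> [linarith [neg_abs_le s]; linarith [abs_nonneg s]]
      have h2 : ‖Gm f F (t, y) - Gm f F (0, y)‖ ≤ L' * |t| :=
        hmvt y hy t ((h1.trans hsδ))
      have h3 : ‖Gm f F (t, y) i j - Gm f F (0, y) i j‖
          ≤ ‖Gm f F (t, y) - Gm f F (0, y)‖ := by
        have e1 : Gm f F (t, y) i j - Gm f F (0, y) i j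
            = ((Gm f F (t, y) - Gm f F (0, y)) i) j := rfl
        rw [e1]
        exact (norm_le_pi_norm _ j).trans (norm_le_pi_norm _ i)
      have hL'0 : 0 ≤ L' := le_max_right _ _
      calc ‖Gm f F (t, y) i j - Gm f F (0, y) i j‖
          ≤ L' * |t| := h3.trans h2
        _ ≤ L' * |s| := by
            exact mul_le_mul_of_nonneg_left h1 hL'0
  -- rewrite goal
  have hAeq : A s y i j = gm F (s, y) i j :=
    hAgm s y (hmemW s y hsδ hy) i j
  have htarget : ((1 : Matrix (Fin 2) (Fin 2) ℝ)
      + s • (divg f y • (1 : Matrix (Fin 2) (Fin 2) ℝ) - (jac f y + (jac f y)ᵀ))) i j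
      = ee i j + s * (divg f y * ee i j - jac f y i j - jac f y j i) := by
    by_cases h : i = j
    · simp only [Matrix.add_apply, Matrix.smul_apply, Matrix.sub_apply, Matrix.one_apply,
        Matrix.transpose_apply, ee, h, if_true, smul_eq_mul, if_pos rfl]
      ring
    · simp only [Matrix.add_apply, Matrix.smul_apply, Matrix.sub_apply, Matrix.one_apply,
        Matrix.transpose_apply, ee, smul_eq_mul, if_neg h]
      ring
  rw [hAeq, htarget]
  have : gm F (s, y) i j - (ee i j + s * (divg f y * ee i j - jac f y i j - jac f y j i))
      = gm F (s, y) i j - gm F (0, y) i j - s * Gm f F (0, y) i j := by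
    rw [hgm0, hGm0]
    ring
  rw [this]
  calc |gm F (s, y) i j - gm F (0, y) i j - s * Gm f F (0, y) i j|
      ≤ L' * |s| * |s| := hbound
    _ = L' * s ^ 2 := by rw [mul_assoc, abs_mul_abs_self, ← sq]
    _ ≤ (L' + 1) * s ^ 2 := by nlinarith [sq_nonneg s]
end

section
/- Let X : ℝ × Ω → ℝ² be the flow of a smooth compactly supported vector field f, and let n ∈ ℝ² be a fixed unit vector. Then J^s := det(DX(s,y)) · |(DX(s,y)^t)^{-1} n| satisfies J^s = 1 + s( div f(y) − Df(y)n · n ) + O(s²) as s → 0. -/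
open Matrix
open Set

/-- Euclidean norm on `ℝ²` (as `Fin 2 → ℝ`). -/
noncomputable def nrm (x : Fin 2 → ℝ) : ℝ := Real.sqrt (x ⬝ᵥ x)

/-- Second-order Taylor bound at 0 for a function that is `C²` at 0. -/
lemma taylor2 (φ : ℝ → ℝ) (c : ℝ) (hφ : ContDiffAt ℝ 2 φ 0) (hc : HasDerivAt φ c 0) :
    ∃ C > 0, ∃ δ > 0, ∀ s : ℝ, |s| < δ → |φ s - (φ 0 + s * c)| ≤ C * s ^ 2 := by
  obtain ⟨U, hUo, hU0, hU⟩ : ∃ U, IsOpen U ∧ (0:ℝ) ∈ U ∧ ContDiffOn ℝ 2 φ U := by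
    obtain ⟨u, uo, xu, h⟩ := hφ.contDiffOn' le_rfl (by simp)
    exact ⟨u, uo, by simpa using xu, by simpa using h⟩
  have hd1 : ContDiffOn ℝ 1 (deriv φ) U := hU.deriv_of_isOpen hUo (by norm_num)
  have hd2 : DifferentiableAt ℝ (deriv φ) 0 :=
    ((hd1.contDiffAt (hUo.mem_nhds hU0)).differentiableAt one_ne_zero)
  set d₂ := deriv (deriv φ) 0 with hd₂
  set K := |d₂| + 1 with hK
  have hKpos : 0 < K := by positivity
  have hlip : ∀ᶠ t in nhds (0:ℝ), |deriv φ t - deriv φ 0| ≤ K * |t| := by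
    have h1 := (hasDerivAt_iff_isLittleO.mp hd2.hasDerivAt).bound (c := 1) one_pos
    filter_upwards [h1] with t ht
    simp only [sub_zero, Real.norm_eq_abs, smul_eq_mul] at ht
    calc |deriv φ t - deriv φ 0| = |(deriv φ t - deriv φ 0 - t * d₂) + t * d₂| := by ring_nf
      _ ≤ |deriv φ t - deriv φ 0 - t * d₂| + |t * d₂| := abs_add_le _ _
      _ ≤ 1 * |t| + |t| * |d₂| := add_le_add ht (by rw [abs_mul])
      _ ≤ K * |t| := by nlinarith [abs_nonneg t, abs_nonneg d₂]
  obtain ⟨δ₁, hδ₁pos, hδ₁⟩ := Metric.eventually_nhds_iff_ball.mp hlip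
  obtain ⟨δ₂, hδ₂pos, hδ₂⟩ := Metric.isOpen_iff.mp hUo 0 hU0
  refine ⟨K, hKpos, min δ₁ δ₂, lt_min hδ₁pos hδ₂pos, fun s hs => ?_⟩
  have hsδ₁ : |s| < δ₁ := lt_of_lt_of_le hs (min_le_left _ _)
  have hsδ₂ : |s| < δ₂ := lt_of_lt_of_le hs (min_le_right _ _)
  have hmem : ∀ t ∈ uIcc (0:ℝ) s, |t| ≤ |s| := by
    intro t ht
    rcases Set.mem_uIcc.mp ht with ⟨h1, h2⟩ | ⟨h1, h2⟩ <;>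
      cases abs_cases s <;> cases abs_cases t <;> linarith
  have hU' : ∀ t ∈ uIcc (0:ℝ) s, t ∈ U := by
    intro t ht
    apply hδ₂
    simp only [Metric.mem_ball, Real.dist_eq, sub_zero]
    exact lt_of_le_of_lt (hmem t ht) hsδ₂
  have key : ‖(φ s - c * s) - (φ 0 - c * 0)‖ ≤ (K * |s|) * ‖s - 0‖ := by
    apply (convex_uIcc (0:ℝ) s).norm_image_sub_le_of_norm_hasDerivWithin_le
        (f := fun t => φ t - c * t) (f' := fun t => deriv φ t - c)
        ?_ ?_ (Set.left_mem_uIcc) (Set.right_mem_uIcc)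
    · intro t ht
      have hdiff : DifferentiableAt ℝ φ t :=
        (hU.contDiffAt (hUo.mem_nhds (hU' t ht))).differentiableAt two_ne_zero
      exact (hdiff.hasDerivAt.sub (by simpa using (hasDerivAt_id t).const_mul c)).hasDerivWithinAt
    · intro t ht
      have h1 : |deriv φ t - deriv φ 0| ≤ K * |t| := by
        apply hδ₁
        simp only [Metric.mem_ball, Real.dist_eq, sub_zero]
        exact lt_of_le_of_lt (hmem t ht) hsδ₁
      rw [hc.deriv] at h1
      calc ‖deriv φ t - c‖ = |deriv φ t - c| := rfl
        _ ≤ K * |t| := h1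
        _ ≤ K * |s| := by nlinarith [hmem t ht]
  simp only [Real.norm_eq_abs, mul_zero, sub_zero] at key
  calc |φ s - (φ 0 + s * c)| = |(φ s - c * s) - φ 0| := by ring_nf
    _ ≤ K * |s| * |s| := key
    _ = K * s ^ 2 := by rw [mul_assoc, ← abs_mul, ← sq, abs_of_nonneg (sq_nonneg s)]

lemma nrm_smul (c : ℝ) (v : Fin 2 → ℝ) : nrm (c • v) = |c| * nrm v := by
  rw [nrm, nrm]
  have h : (c • v) ⬝ᵥ (c • v) = c ^ 2 * (v ⬝ᵥ v) := by
    simp [smul_dotProduct, dotProduct_smul, smul_eq_mul]; ring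
  rw [h, Real.sqrt_mul (sq_nonneg c), Real.sqrt_sq_eq_abs]

noncomputable abbrev E2 : Type := Fin 2 → ℝ

/-- The spatial differential of the flow, as a continuous linear map. -/
noncomputable def Mmap (X : ℝ → E2 → E2) (y : E2) : ℝ → (E2 →L[ℝ] E2) :=
  fun s => (fderiv ℝ (fun p : ℝ × E2 => X p.1 p.2) (s, y)).comp (ContinuousLinearMap.inr ℝ ℝ E2)

section flow

variable {f : E2 → E2} {X : ℝ → E2 → E2} {y : E2}

lemma inr_eq : (ContinuousLinearMap.inr ℝ ℝ E2) =
    ((0 : E2 →L[ℝ] ℝ).prod (ContinuousLinearMap.id ℝ E2)) := rfl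

lemma hasFDerivAt_X (hXsmooth : ContDiff ℝ 2 (fun p : ℝ × E2 => X p.1 p.2)) (s : ℝ) :
    HasFDerivAt (X s) (Mmap X y s) y := by
  have hF : Differentiable ℝ (fun p : ℝ × E2 => X p.1 p.2) :=
    hXsmooth.differentiable two_ne_zero
  have hcurve : HasFDerivAt (fun x : E2 => ((s : ℝ), x))
      (ContinuousLinearMap.inr ℝ ℝ E2) y := by
    rw [inr_eq]
    exact (hasFDerivAt_const s y).prodMk (hasFDerivAt_id y)
  exact (hF (s, y)).hasFDerivAt.comp y hcurve

lemma fderiv_time (hXsmooth : ContDiff ℝ 2 (fun p : ℝ × E2 => X p.1 p.2))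
    (hXode : ∀ s x, HasDerivAt (fun t => X t x) (f (X s x)) s) (p : ℝ × E2) :
    fderiv ℝ (fun p : ℝ × E2 => X p.1 p.2) p ((1 : ℝ), (0 : E2)) = f (X p.1 p.2) := by
  have hF : Differentiable ℝ (fun p : ℝ × E2 => X p.1 p.2) :=
    hXsmooth.differentiable two_ne_zero
  have hcurve : HasDerivAt (fun t : ℝ => ((t : ℝ), p.2)) ((1 : ℝ), (0 : E2)) p.1 :=
    (hasDerivAt_id p.1).prodMk (hasDerivAt_const p.1 p.2)
  have h2 : HasDerivAt (fun t => X t p.2)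
      (fderiv ℝ (fun p : ℝ × E2 => X p.1 p.2) p ((1 : ℝ), (0 : E2))) p.1 := by
    have := (hF (p.1, p.2)).hasFDerivAt.comp_hasDerivAt p.1 hcurve
    exact this
  exact h2.unique (hXode p.1 p.2)

lemma Mmap_hasDerivAt (hf : ContDiff ℝ 2 f)
    (hXsmooth : ContDiff ℝ 2 (fun p : ℝ × E2 => X p.1 p.2))
    (hXode : ∀ s x, HasDerivAt (fun t => X t x) (f (X s x)) s) (s : ℝ) :
    HasDerivAt (Mmap X y) ((fderiv ℝ f (X s y)).comp (Mmap X y s)) s := by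
  set F := fun p : ℝ × E2 => X p.1 p.2 with hFdef
  have hF : Differentiable ℝ F := hXsmooth.differentiable two_ne_zero
  set G := fderiv ℝ F with hGdef
  have hG : ContDiff ℝ 1 G := hXsmooth.fderiv_right (by norm_num)
  have hGd : DifferentiableAt ℝ G (s, y) := hG.differentiable one_ne_zero (s, y)
  have hcurve : HasDerivAt (fun t : ℝ => ((t : ℝ), y)) ((1 : ℝ), (0 : E2)) s :=
    (hasDerivAt_id s).prodMk (hasDerivAt_const s y)
  have h1 : HasDerivAt (fun t => G (t, y)) (fderiv ℝ G (s, y) ((1 : ℝ), (0 : E2))) s := by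
    exact hGd.hasFDerivAt.comp_hasDerivAt s hcurve
  have h2 : HasDerivAt (Mmap X y)
      ((fderiv ℝ G (s, y) ((1 : ℝ), (0 : E2))).comp (ContinuousLinearMap.inr ℝ ℝ E2)) s := by
    have := h1.clm_comp (hasDerivAt_const s (ContinuousLinearMap.inr ℝ ℝ E2))
    exact this.congr_deriv (by simp)
  convert h2 using 1
  ext v
  have hsymm : fderiv ℝ G (s, y) ((1 : ℝ), (0 : E2)) ((0 : ℝ), v)
      = fderiv ℝ G (s, y) ((0 : ℝ), v) ((1 : ℝ), (0 : E2)) :=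
    second_derivative_symmetric (fun z => (hF z).hasFDerivAt) hGd.hasFDerivAt _ _
  have happ : HasFDerivAt (fun p : ℝ × E2 => G p ((1 : ℝ), (0 : E2)))
      ((ContinuousLinearMap.apply ℝ E2 ((1 : ℝ), (0 : E2))).comp (fderiv ℝ G (s, y))) (s, y) :=
    (ContinuousLinearMap.apply ℝ E2 ((1 : ℝ), (0 : E2))).hasFDerivAt.comp _ hGd.hasFDerivAt
  have hchain : HasFDerivAt (fun p : ℝ × E2 => f (F p))
      ((fderiv ℝ f (X s y)).comp (G (s, y))) (s, y) :=
    ((hf.differentiable two_ne_zero (F (s, y))).hasFDerivAt).comp _ (hF (s, y)).hasFDerivAt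
  have hfun : (fun p : ℝ × E2 => G p ((1 : ℝ), (0 : E2))) = fun p : ℝ × E2 => f (F p) := by
    funext p
    exact fderiv_time hXsmooth hXode p
  rw [hfun] at happ
  have heq := happ.unique hchain
  have heq' := congrFun (congrArg (fun (L : (ℝ × E2) →L[ℝ] E2) => (L : (ℝ × E2) → E2)) heq)
      ((0 : ℝ), v)
  simp only [ContinuousLinearMap.comp_apply, ContinuousLinearMap.apply_apply] at heq'
  simp only [ContinuousLinearMap.comp_apply, ContinuousLinearMap.inr_apply, Mmap]
  rw [hsymm, heq']

lemma Mmap_contDiff (hf : ContDiff ℝ 2 f)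
    (hXsmooth : ContDiff ℝ 2 (fun p : ℝ × E2 => X p.1 p.2))
    (hXode : ∀ s x, HasDerivAt (fun t => X t x) (f (X s x)) s) :
    ContDiff ℝ 2 (Mmap X y) := by
  have hM1 : ContDiff ℝ 1 (Mmap X y) := by
    have hG : ContDiff ℝ 1 (fderiv ℝ (fun p : ℝ × E2 => X p.1 p.2)) :=
      hXsmooth.fderiv_right (by norm_num)
    have h1 : ContDiff ℝ 1 (fun s : ℝ => fderiv ℝ (fun p : ℝ × E2 => X p.1 p.2) (s, y)) :=
      hG.comp (contDiff_id.prodMk contDiff_const)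
    exact h1.clm_comp contDiff_const
  have hderiv : deriv (Mmap X y) = fun s => (fderiv ℝ f (X s y)).comp (Mmap X y s) := by
    funext s
    exact (Mmap_hasDerivAt hf hXsmooth hXode s).deriv
  rw [show (2 : WithTop ℕ∞) = 1 + 1 from by norm_num, contDiff_succ_iff_deriv]
  refine ⟨fun s => (Mmap_hasDerivAt hf hXsmooth hXode s).differentiableAt, by simp, ?_⟩
  rw [hderiv]
  have hXy : ContDiff ℝ 2 (fun s : ℝ => X s y) := hXsmooth.comp (contDiff_id.prodMk contDiff_const)
  have hDf : ContDiff ℝ 1 (fderiv ℝ f) := hf.fderiv_right (by norm_num)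
  exact (hDf.comp (hXy.of_le one_le_two)).clm_comp hM1

end flow

/-- For the flow `X` of a smooth compactly supported vector field `f` and a fixed
unit vector `n`, `J^s = det(DX(s,y)) |(DX(s,y)ᵗ)⁻¹ n|` satisfies
`J^s = 1 + s(div f(y) − Df(y)n·n) + O(s²)` as `s → 0`. -/
theorem stmt5 (f : (Fin 2 → ℝ) → (Fin 2 → ℝ)) (hf : ContDiff ℝ 2 f)
    (hsupp : HasCompactSupport f)
    (X : ℝ → (Fin 2 → ℝ) → (Fin 2 → ℝ))
    (hX0 : ∀ x, X 0 x = x)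
    (hXode : ∀ s x, HasDerivAt (fun t => X t x) (f (X s x)) s)
    (hXsmooth : ContDiff ℝ 2 (fun p : ℝ × (Fin 2 → ℝ) => X p.1 p.2))
    (n : Fin 2 → ℝ) (hn : n ⬝ᵥ n = 1) (y : Fin 2 → ℝ) :
    ∃ C > 0, ∃ δ > 0, ∀ s : ℝ, |s| < δ →
      |(jac (X s) y).det * nrm (((jac (X s) y)ᵀ)⁻¹ *ᵥ n)
        - (1 + s * (divg f y - (jac f y *ᵥ n) ⬝ᵥ n))| ≤ C * s ^ 2 := by
  classical
  have hAM : ∀ (s : ℝ) (i j : Fin 2), jac (X s) y i j = Mmap X y s (Pi.single j 1) i := by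
    intro s i j
    rw [jac, (hasFDerivAt_X hXsmooth s).fderiv]
  have hM2 : ContDiff ℝ 2 (Mmap X y) := Mmap_contDiff hf hXsmooth hXode
  have hM0 : Mmap X y 0 = ContinuousLinearMap.id ℝ E2 := by
    have h1 : HasFDerivAt (X 0) (Mmap X y 0) y := hasFDerivAt_X hXsmooth 0
    have h2 : HasFDerivAt (X 0) (ContinuousLinearMap.id ℝ E2) y := by
      have hX0' : X 0 = fun x => x := funext hX0
      rw [hX0']
      exact hasFDerivAt_id y
    exact h1.unique h2
  have hA0 : ∀ i j : Fin 2, jac (X 0) y i j = if i = j then 1 else 0 := by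
    intro i j
    rw [hAM]
    simp [hM0, Pi.single_apply, eq_comm]
  have hAc : ∀ i j : Fin 2, ContDiff ℝ 2 (fun s => jac (X s) y i j) := by
    intro i j
    have h1 : ContDiff ℝ 2 (fun s => Mmap X y s (Pi.single j 1)) :=
      hM2.clm_apply contDiff_const
    have h2 := (contDiff_pi.mp h1) i
    have h5 : (fun s => jac (X s) y i j) = fun s => (Mmap X y s (Pi.single j 1)) i :=
      funext fun s => hAM s i j
    rw [h5]
    exact h2
  have hA' : ∀ i j : Fin 2, HasDerivAt (fun s => jac (X s) y i j) (jac f y i j) 0 := by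
    intro i j
    have h1 := Mmap_hasDerivAt (y := y) hf hXsmooth hXode 0
    have h2 : HasDerivAt (fun s => Mmap X y s (Pi.single j 1))
        (fderiv ℝ f y (Pi.single j 1)) 0 := by
      have h3 := h1.clm_apply (hasDerivAt_const 0 (Pi.single (M := fun _ : Fin 2 => ℝ) j 1))
      simpa [hM0, hX0 y] using h3
    have h4 := (ContinuousLinearMap.proj (R := ℝ) (φ := fun _ : Fin 2 => ℝ)
        i).hasFDerivAt.comp_hasDerivAt 0 h2
    have h5 : (fun s => jac (X s) y i j) = fun s => (Mmap X y s (Pi.single j 1)) i :=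
      funext fun s => hAM s i j
    rw [h5, jac]
    exact h4
  have hn' : n 0 * n 0 + n 1 * n 1 = 1 := by
    simpa [dotProduct, Fin.sum_univ_two] using hn
  set w0 : ℝ → ℝ := fun s => jac (X s) y 1 1 * n 0 - jac (X s) y 1 0 * n 1 with hw0def
  set w1 : ℝ → ℝ := fun s => jac (X s) y 0 0 * n 1 - jac (X s) y 0 1 * n 0 with hw1def
  set q : ℝ → ℝ := fun s => w0 s * w0 s + w1 s * w1 s with hqdef
  set φ : ℝ → ℝ := fun s => Real.sqrt (q s) with hφdef
  have hw00 : w0 0 = n 0 := by simp [hw0def, hA0]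
  have hw10 : w1 0 = n 1 := by simp [hw1def, hA0]
  have hq0 : q 0 = 1 := by rw [hqdef]; simp only [hw00, hw10]; exact hn'
  have hφ0 : φ 0 = 1 := by rw [hφdef]; simp [hq0]
  have hadj : ∀ s, (Matrix.adjugate ((jac (X s) y)ᵀ)) *ᵥ n = ![w0 s, w1 s] := by
    intro s
    funext i
    fin_cases i <;>
      · simp [Matrix.adjugate_fin_two, Matrix.mulVec, dotProduct, Fin.sum_univ_two,
          Matrix.transpose_apply, hw0def, hw1def]
        ring
  have hφeq : ∀ s, φ s = nrm ((Matrix.adjugate ((jac (X s) y)ᵀ)) *ᵥ n) := by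
    intro s
    rw [hadj s, nrm, hφdef, hqdef]
    simp [dotProduct, Fin.sum_univ_two]
  have hw0c : ContDiff ℝ 2 w0 := by
    rw [hw0def]
    exact ((hAc 1 1).mul contDiff_const).sub ((hAc 1 0).mul contDiff_const)
  have hw1c : ContDiff ℝ 2 w1 := by
    rw [hw1def]
    exact ((hAc 0 0).mul contDiff_const).sub ((hAc 0 1).mul contDiff_const)
  have hqc : ContDiff ℝ 2 q := by
    rw [hqdef]
    exact (hw0c.mul hw0c).add (hw1c.mul hw1c)
  have hφc : ContDiffAt ℝ 2 φ 0 := by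
    have hs : ContDiffAt ℝ 2 Real.sqrt (q 0) := by
      rw [hq0]
      exact Real.contDiffAt_sqrt one_ne_zero
    exact hs.comp 0 hqc.contDiffAt
  set c := divg f y - (jac f y *ᵥ n) ⬝ᵥ n with hcdef
  have hw0' : HasDerivAt w0 (jac f y 1 1 * n 0 - jac f y 1 0 * n 1) 0 := by
    rw [hw0def]
    exact ((hA' 1 1).mul_const (n 0)).sub ((hA' 1 0).mul_const (n 1))
  have hw1' : HasDerivAt w1 (jac f y 0 0 * n 1 - jac f y 0 1 * n 0) 0 := by
    rw [hw1def]
    exact ((hA' 0 0).mul_const (n 1)).sub ((hA' 0 1).mul_const (n 0))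
  have hq' : HasDerivAt q (2 * (n 0 * (jac f y 1 1 * n 0 - jac f y 1 0 * n 1)
      + n 1 * (jac f y 0 0 * n 1 - jac f y 0 1 * n 0))) 0 := by
    have h := (hw0'.mul hw0').add (hw1'.mul hw1')
    rw [hqdef]
    refine h.congr_deriv (Eq.symm ?_)
    rw [hw00, hw10]
    ring
  have hφ' : HasDerivAt φ c 0 := by
    have hs := Real.hasDerivAt_sqrt (x := q 0) (by rw [hq0]; norm_num)
    have h := hs.comp 0 hq'
    rw [hφdef]
    refine h.congr_deriv (Eq.symm ?_)
    rw [hq0, Real.sqrt_one, hcdef, divg, Matrix.trace_fin_two]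
    simp only [Matrix.mulVec, dotProduct, Fin.sum_univ_two]
    field_simp
    linear_combination (-(1:ℝ)) * (jac f y 0 0 + jac f y 1 1) * hn'
  obtain ⟨C, hC, δ₀, hδ₀, hT⟩ := taylor2 φ c hφc hφ'
  have hdetc : Continuous (fun s => (jac (X s) y).det) := by
    have h : (fun s => (jac (X s) y).det)
        = fun s => jac (X s) y 0 0 * jac (X s) y 1 1 - jac (X s) y 0 1 * jac (X s) y 1 0 :=
      funext fun s => Matrix.det_fin_two _
    rw [h]
    exact ((hAc 0 0).continuous.mul (hAc 1 1).continuous).sub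
      ((hAc 0 1).continuous.mul (hAc 1 0).continuous)
  have hdet0 : (jac (X 0) y).det = 1 := by
    rw [Matrix.det_fin_two]
    simp [hA0]
  have hpos : ∀ᶠ s in nhds (0 : ℝ), 0 < (jac (X s) y).det := by
    have h := hdetc.continuousAt (x := 0)
    have h2 : ∀ᶠ u in nhds ((jac (X 0) y).det), 0 < u := by
      rw [hdet0]
      exact eventually_gt_nhds one_pos
    exact h.eventually h2
  obtain ⟨δ₁, hδ₁, hball⟩ := Metric.eventually_nhds_iff_ball.mp hpos
  refine ⟨C, hC, min δ₀ δ₁, lt_min hδ₀ hδ₁, fun s hs => ?_⟩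
  have hs0 : |s| < δ₀ := lt_of_lt_of_le hs (min_le_left _ _)
  have hs1 : 0 < (jac (X s) y).det := by
    apply hball
    simp only [Metric.mem_ball, Real.dist_eq, sub_zero]
    exact lt_of_lt_of_le hs (min_le_right _ _)
  have hLHS : (jac (X s) y).det * nrm (((jac (X s) y)ᵀ)⁻¹ *ᵥ n) = φ s := by
    have hdT : ((jac (X s) y)ᵀ).det = (jac (X s) y).det := Matrix.det_transpose _
    rw [Matrix.inv_def, hdT, Ring.inverse_eq_inv, Matrix.smul_mulVec, nrm_smul,
      abs_inv, abs_of_pos hs1, hφeq s]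
    rw [← mul_assoc, mul_inv_cancel₀ (ne_of_gt hs1), one_mul]
  rw [hLHS]
  have h := hT s hs0
  rw [hφ0] at h
  exact h
end
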